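/- For all real t with 0 < t ≤ 1/2, one has |ζ(1+it) − 1/(it)| < 0.951. (This bound is unconditional.) -/

import Mathlib

/-!
For `Re s > 1`, comparing `∑ n ^ (-s)` with `∫₁^∞ x ^ (-s) dx = 1 / (s - 1)` gives
`ζ(s) - 1 / (s - 1) = ∑_{n ≥ 1} (n ^ (-s) - ∫_n^{n+1} x ^ (-s) dx)`.
If `Re s ≥ 1` then `‖n ^ (-s) - x ^ (-s)‖ ≤ ‖s‖ (x - n) / n²` on `[n, n + 1]`, so the `n`-th term
is at most `‖s‖ / (2 n²)`. This domination carries the identity over to the line `Re s = 1` and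
bounds the sum by `‖s‖ π² / 12`; for `s = 1 + it` with `0 < t ≤ 1/2` this is `≤ √5 π² / 24 < 0.93`.
-/

open Complex Filter Topology intervalIntegral

/-- `n ^ (-s) - ∫_n^{n+1} x ^ (-s) dx` with the integral evaluated, hence meaningless at `s = 1`. -/
noncomputable def zetaDefect (n : ℕ) (s : ℂ) : ℂ :=
  (n : ℂ) ^ (-s) - (((n : ℂ) + 1) ^ (1 - s) - (n : ℂ) ^ (1 - s)) / (1 - s)

lemma zetaDefect_eq_integral {n : ℕ} (hn : n ≠ 0) {s : ℂ} (hs : s ≠ 1) :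
    zetaDefect n s = ∫ x : ℝ in (n : ℝ)..(n + 1), ((n : ℂ) ^ (-s) - (x : ℂ) ^ (-s)) := by
  have h0 : (0 : ℝ) ∉ Set.uIcc (n : ℝ) (n + 1) := by
    rw [Set.uIcc_of_le (by linarith)]
    exact fun h => (Nat.cast_pos.mpr (Nat.pos_of_ne_zero hn)).not_ge h.1
  rw [integral_sub intervalIntegrable_const
      (intervalIntegrable_cpow (Or.inr h0)), integral_const,
    integral_cpow (Or.inr ⟨by simpa using hs, h0⟩), zetaDefect]
  push_cast
  rw [add_sub_cancel_left, one_smul, neg_add_eq_sub]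

lemma norm_cpow_neg_sub_cpow_neg_le {a x : ℝ} (ha : 1 ≤ a) (hax : a ≤ x) {s : ℂ}
    (hre : 1 ≤ s.re) : ‖(a : ℂ) ^ (-s) - (x : ℂ) ^ (-s)‖ ≤ ‖s‖ * (x - a) / a ^ 2 := by
  have hs0 : s ≠ 0 := by rintro rfl; norm_num at hre
  have h0 : (0 : ℝ) ∉ Set.uIcc a x := by
    rw [Set.uIcc_of_le hax]; exact fun h => by linarith [h.1]
  have hderiv : (a : ℂ) ^ (-s) - (x : ℂ) ^ (-s) = s * ∫ u : ℝ in a..x, (u : ℂ) ^ (-s - 1) := by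
    rw [integral_cpow (Or.inr ⟨by simpa using hs0, h0⟩), sub_add_cancel]
    field_simp
    ring
  have hbound : ∀ u ∈ Set.uIoc a x, ‖(u : ℂ) ^ (-s - 1)‖ ≤ (a ^ 2)⁻¹ := by
    intro u hu
    rw [Set.uIoc_of_le hax] at hu
    have hu1 : 1 ≤ u := ha.trans hu.1.le
    rw [norm_cpow_eq_rpow_re_of_pos (by linarith), ← Real.rpow_two, ← Real.rpow_neg (by linarith)]
    calc u ^ (-s - 1).re ≤ u ^ (-2 : ℝ) := by
          apply Real.rpow_le_rpow_of_exponent_le hu1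
          rw [sub_re, neg_re, one_re]; linarith
      _ ≤ a ^ (-2 : ℝ) := Real.rpow_le_rpow_of_nonpos (by linarith) hu.1.le (by norm_num)
  rw [hderiv, norm_mul, mul_div_assoc, div_eq_mul_inv (x - a), mul_comm (x - a)]
  gcongr
  simpa [abs_of_nonneg (sub_nonneg.mpr hax)] using
    norm_integral_le_of_norm_le_const hbound

lemma norm_zetaDefect_le {n : ℕ} (hn : n ≠ 0) {s : ℂ} (hre : 1 ≤ s.re) (hs : s ≠ 1) :
    ‖zetaDefect n s‖ ≤ ‖s‖ / 2 * (1 / (n : ℝ) ^ 2) := by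
  have hn1 : (1 : ℝ) ≤ n := Nat.one_le_cast.mpr (Nat.one_le_iff_ne_zero.mpr hn)
  rw [zetaDefect_eq_integral hn hs]
  calc _ ≤ ∫ x : ℝ in (n : ℝ)..(n + 1), ‖s‖ * (x - n) / (n : ℝ) ^ 2 := by
        refine norm_integral_le_of_norm_le (by linarith) ?_
          (Continuous.intervalIntegrable (by fun_prop) _ _)
        exact .of_forall fun x hx => norm_cpow_neg_sub_cpow_neg_le hn1 hx.1.le hre
    _ = ‖s‖ / 2 * (1 / (n : ℝ) ^ 2) := by
        simp only [integral_div, integral_const_mul,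
          integral_comp_sub_right fun x : ℝ => x, integral_id]
        ring

lemma sum_range_zetaDefect {s : ℂ} (hs : s ≠ 1) (N : ℕ) :
    ∑ n ∈ Finset.range N, zetaDefect (n + 1) s =
      ∑ n ∈ Finset.range N, ((n : ℂ) + 1) ^ (-s) - (((N : ℂ) + 1) ^ (1 - s) - 1) / (1 - s) := by
  have hs' : 1 - s ≠ 0 := sub_ne_zero.mpr hs.symm
  induction N with
  | zero => simp
  | succ N ih =>
    rw [Finset.sum_range_succ, Finset.sum_range_succ, ih, zetaDefect]
    push_cast
    field_simp
    ring

lemma tendsto_natCast_add_one_cpow_atTop {w : ℂ} (hw : w.re < 0) :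
    Tendsto (fun N : ℕ => ((N : ℂ) + 1) ^ w) atTop (𝓝 0) := by
  rw [tendsto_zero_iff_norm_tendsto_zero]
  have hnorm (N : ℕ) : ‖((N : ℂ) + 1) ^ w‖ = ((N : ℝ) + 1) ^ w.re := by
    rw [← norm_cpow_eq_rpow_re_of_pos (by positivity)]
    push_cast
    rfl
  simp only [hnorm]
  simpa [Function.comp_def] using (tendsto_rpow_neg_atTop (neg_pos.mpr hw)).comp
    (tendsto_atTop_add_const_right atTop 1 tendsto_natCast_atTop_atTop)

lemma hasSum_one_div_nat_add_one_sq :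
    HasSum (fun n : ℕ => 1 / ((n : ℝ) + 1) ^ 2) (Real.pi ^ 2 / 6) := by
  simpa using (hasSum_nat_add_iff' 1).mpr hasSum_zeta_two

lemma summable_norm_zetaDefect {s : ℂ} (hre : 1 ≤ s.re) (hs : s ≠ 1) :
    Summable fun n : ℕ => ‖zetaDefect (n + 1) s‖ := by
  refine .of_nonneg_of_le (fun _ => norm_nonneg _) (fun n => ?_)
    (hasSum_one_div_nat_add_one_sq.mul_left (‖s‖ / 2)).summable
  simpa using norm_zetaDefect_le n.succ_ne_zero hre hs

lemma hasSum_zetaDefect_of_one_lt_re {s : ℂ} (hre : 1 < s.re) :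
    HasSum (fun n : ℕ => zetaDefect (n + 1) s) (riemannZeta s - 1 / (s - 1)) := by
  have hs : s ≠ 1 := by rintro rfl; simp at hre
  rw [hasSum_iff_tendsto_nat_of_summable_norm (summable_norm_zetaDefect hre.le hs)]
  have hζ : HasSum (fun n : ℕ => ((n : ℂ) + 1) ^ (-s)) (riemannZeta s) := by
    have hsum := (summable_nat_add_iff 1).mpr (Complex.summable_one_div_nat_cpow.mpr hre)
    simp only [Nat.cast_add, Nat.cast_one, one_div, ← cpow_neg] at hsum
    simpa [zeta_eq_tsum_one_div_nat_add_one_cpow hre, ← cpow_neg] using hsum.hasSum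
  have hpow := (tendsto_natCast_add_one_cpow_atTop (w := 1 - s) (by simpa using hre)).sub_const 1
    |>.div_const (1 - s)
  convert hζ.tendsto_sum_nat.sub hpow using 2
  · exact sum_range_zetaDefect hs _
  · rw [zero_sub, neg_div, ← div_neg, neg_sub]

lemma continuousAt_zetaDefect {n : ℕ} (hn : n ≠ 0) {s : ℂ} (hs : s ≠ 1) :
    ContinuousAt (zetaDefect n) s := by
  have hn₀ : (n : ℂ) ≠ 0 := Nat.cast_ne_zero.mpr hn
  have hn₁ : (n : ℂ) + 1 ≠ 0 := by exact_mod_cast n.succ_ne_zero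
  refine ((continuous_neg.const_cpow (.inl hn₀)).continuousAt).sub
    (ContinuousAt.div ?_ (by fun_prop) (sub_ne_zero.mpr hs.symm))
  exact (((continuous_sub_left 1).const_cpow (.inl hn₁)).sub
    ((continuous_sub_left 1).const_cpow (.inl hn₀))).continuousAt

theorem hasSum_zetaDefect {s : ℂ} (hre : 1 ≤ s.re) (hs : s ≠ 1) :
    HasSum (fun n : ℕ => zetaDefect (n + 1) s) (riemannZeta s - 1 / (s - 1)) := by
  suffices h : ∑' n : ℕ, zetaDefect (n + 1) s = riemannZeta s - 1 / (s - 1) by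
    rw [← h]; exact (summable_norm_zetaDefect hre hs).of_norm.hasSum
  have : (𝓝[{z : ℂ | 1 < z.re}] s).NeBot :=
    mem_closure_iff_nhdsWithin_neBot.mp (by simpa using hre)
  have hnear : ∀ᶠ z in 𝓝[{z : ℂ | 1 < z.re}] s, 1 < z.re ∧ ‖z‖ ≤ ‖s‖ + 1 := by
    filter_upwards [self_mem_nhdsWithin, nhdsWithin_le_nhds (Metric.closedBall_mem_nhds s one_pos)]
      with z hz hzs
    have hzs : ‖z - s‖ ≤ 1 := mem_closedBall_iff_norm.mp hzs
    exact ⟨hz, (norm_le_norm_add_norm_sub' z s).trans (by linarith)⟩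
  have hsum : Tendsto (fun z => ∑' n : ℕ, zetaDefect (n + 1) z) (𝓝[{z : ℂ | 1 < z.re}] s)
      (𝓝 (∑' n : ℕ, zetaDefect (n + 1) s)) := by
    refine tendsto_tsum_of_dominated_convergence
      (hasSum_one_div_nat_add_one_sq.mul_left ((‖s‖ + 1) / 2)).summable
      (fun n => (continuousAt_zetaDefect n.succ_ne_zero hs).tendsto.mono_left nhdsWithin_le_nhds) ?_
    filter_upwards [hnear] with z ⟨hz, hzs⟩ n
    calc ‖zetaDefect (n + 1) z‖ ≤ ‖z‖ / 2 * (1 / ((n + 1 : ℕ) : ℝ) ^ 2) :=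
          norm_zetaDefect_le n.succ_ne_zero hz.le (by rintro rfl; simp at hz)
      _ ≤ (‖s‖ + 1) / 2 * (1 / ((n : ℝ) + 1) ^ 2) := by push_cast; gcongr
  have hlim : ContinuousAt (fun z => riemannZeta z - 1 / (z - 1)) s :=
    (differentiableAt_riemannZeta hs).continuousAt.sub
      (continuousAt_const.div (continuousAt_id.sub continuousAt_const) (sub_ne_zero.mpr hs))
  refine tendsto_nhds_unique (hsum.congr' ?_) (hlim.tendsto.mono_left nhdsWithin_le_nhds)
  filter_upwards [hnear] with z ⟨hz, _⟩
  exact (hasSum_zetaDefect_of_one_lt_re hz).tsum_eq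

theorem norm_riemannZeta_sub_one_div_le {s : ℂ} (hre : 1 ≤ s.re) (hs : s ≠ 1) :
    ‖riemannZeta s - 1 / (s - 1)‖ ≤ ‖s‖ * (Real.pi ^ 2 / 12) := by
  rw [← (hasSum_zetaDefect hre hs).tsum_eq]
  refine (tsum_of_norm_bounded (hasSum_one_div_nat_add_one_sq.mul_left (‖s‖ / 2))
    fun n => ?_).trans_eq (by ring)
  simpa using norm_zetaDefect_le n.succ_ne_zero hre hs

/-- For `0 < t ≤ 1/2` we have the unconditional bound `|ζ(1+it) − 1/(it)| < 0.951`. -/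
theorem zeta_near_one_bound (t : ℝ) (ht0 : 0 < t) (ht1 : t ≤ 1 / 2) :
    ‖riemannZeta (1 + t * I) - 1 / (I * t)‖ < 0.951 := by
  have hs : 1 + t * I ≠ 1 := by simpa using ht0.ne'
  have hnorm : ‖1 + t * I‖ ^ 2 = 1 + t ^ 2 := by
    rw [Complex.sq_norm, normSq_apply]; simp [sq]
  have hnorm_lt : ‖1 + t * I‖ < 1.12 := by nlinarith [norm_nonneg (1 + t * I)]
  have hpi : Real.pi ^ 2 < 9.93 := by nlinarith [Real.pi_lt_d2, Real.pi_pos]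
  calc ‖riemannZeta (1 + t * I) - 1 / (I * t)‖
      = ‖riemannZeta (1 + t * I) - 1 / (1 + t * I - 1)‖ := by ring_nf
    _ ≤ ‖1 + t * I‖ * (Real.pi ^ 2 / 12) := norm_riemannZeta_sub_one_div_le (by simp) hs
    _ < 0.951 := by nlinarith [norm_nonneg (1 + t * I)]
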